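/- arXiv:1211.4673 — 7 statements merged into one kernel-verified Lean document; each statement's English description precedes it below -/
import Mathlib

section
/- Let n, d, r be positive integers with gcd(r,d) = 1. Then the number of y with 1 ≤ y ≤ n and gcd(dy + r, n) = 1 equals n · ∏_{p prime, p ∣ n, p ∤ d} (1 − 1/p). -/
/-!
Split `n = w * m`, where `m` collects the prime powers of `n` at primes not dividing `d` and `w`
the rest. Every prime of `w` divides `d` but not `r`, hence not `d * y + r`; so the condition
`gcd (d * y + r) n = 1` only involves `m`, and is periodic in `y` with period `m`. On one period
`y ↦ d * y + r` permutes the residues mod `m` because `d` is a unit mod `m`, so each of the `w`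
periods contributes `φ m = m * ∏_{p ∣ m} (1 - 1/p)`.
-/

open Finset Function

namespace Nat

theorem exists_mul_eq_primeFactors_filter (P : ℕ → Prop) [DecidablePred P] {n : ℕ}
    (hn : n ≠ 0) :
    ∃ a b, a * b = n ∧ a.primeFactors = {p ∈ n.primeFactors | P p} ∧
      b.primeFactors = {p ∈ n.primeFactors | ¬ P p} := by
  have primeFactors_part : ∀ (Q : ℕ → Prop) [DecidablePred Q],
      ((n.factorization.filter Q).prod (· ^ ·)).primeFactors = {p ∈ n.primeFactors | Q p} := by
    intro Q _
    rw [← support_factorization, prod_pow_factorization_eq_self, Finsupp.support_filter,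
      support_factorization]
    intro p hp
    rw [Finsupp.support_filter, support_factorization] at hp
    exact prime_of_mem_primeFactors (mem_filter.1 hp).1
  exact ⟨_, _, by rw [Finsupp.prod_filter_mul_prod_filter_not, prod_factorization_pow_eq_self hn],
    primeFactors_part P, primeFactors_part _⟩

theorem Coprime.of_forall_prime_dvd_imp_dvd {a d w : ℕ} (had : Coprime a d)
    (hw : ∀ p, p.Prime → p ∣ w → p ∣ d) : Coprime a w :=
  coprime_of_dvd fun p hp hpa hpw => hp.ne_one <| Coprime.eq_one_of_dvd (had.coprime_dvd_left hpa)
    (hw p hp hpw)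

theorem filter_Ico_card_eq_mul_count_of_periodic (n a k : ℕ) (p : ℕ → Prop) [DecidablePred p]
    (pp : Periodic p a) : #{x ∈ Ico n (n + k * a) | p x} = k * a.count p := by
  induction k with
  | zero => simp
  | succ k ih =>
    rw [add_mul, one_mul, ← add_assoc,
      ← Ico_union_Ico_eq_Ico (b := n + k * a) (by omega) (by omega), filter_union,
      card_union_of_disjoint (disjoint_filter_filter (Ico_disjoint_Ico_consecutive _ _ _)),
      ih, filter_Ico_card_eq_of_periodic _ _ _ pp, add_mul, one_mul]

theorem count_coprime_mul_add {d m : ℕ} (hdm : Coprime d m) (c : ℕ) :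
    m.count (fun y => Coprime (d * y + c) m) = φ m := by
  set f : ℕ → ℕ := fun y => (d * y + c) % m
  have hinj : Set.InjOn f (range m) := by
    intro y₁ hy₁ y₂ hy₂ hf
    have hmod : d * y₁ ≡ d * y₂ [MOD m] := ModEq.add_right_cancel' c hf
    exact (ModEq.cancel_left_of_coprime (coprime_comm.1 hdm) hmod).eq_of_lt_of_lt
      (mem_range.1 hy₁) (mem_range.1 hy₂)
  have himage : (range m).image f = range m :=
    eq_of_subset_of_card_le
      (fun x hx => by
        obtain ⟨y, hy, rfl⟩ := mem_image.1 hx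
        exact mem_range.2 (mod_lt _ (zero_lt_of_lt (mem_range.1 hy))))
      (Finset.card_image_of_injOn hinj).ge
  have hfilter : {y ∈ range m | Coprime (d * y + c) m} = {y ∈ range m | Coprime (f y) m} :=
    filter_congr fun y _ => (ZMod.coprime_mod_iff_coprime _ _).symm
  rw [count_eq_card_filter_range, hfilter,
    ← Finset.card_image_of_injOn (hinj.mono (filter_subset _ _)),
    ← filter_image (p := (Coprime · m)), himage, totient_eq_card_coprime]
  exact congrArg card (filter_congr fun x _ => coprime_comm)

end Nat

open Nat

theorem stmt_2_general (n d r : ℕ) (hn : 0 < n)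
    (h : Nat.gcd r d = 1) :
    (((Finset.Icc 1 n).filter (fun y => Nat.gcd (d * y + r) n = 1)).card : ℚ) =
      (n : ℚ) * ∏ p ∈ n.primeFactors.filter (fun p => ¬ p ∣ d), (1 - 1 / (p : ℚ)) := by
  obtain ⟨w, m, rfl, hw, hm⟩ := exists_mul_eq_primeFactors_filter (· ∣ d) hn.ne'
  have hw0 : w ≠ 0 := left_ne_zero_of_mul hn.ne'
  have hm0 : m ≠ 0 := right_ne_zero_of_mul hn.ne'
  have hdm : Coprime d m := coprime_of_dvd fun p hp hpd hpm =>
    (mem_filter.1 (hm ▸ mem_primeFactors.2 ⟨hp, hpm, hm0⟩ :)).2 hpd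
  have hcoprime : ∀ y, Coprime (d * y + r) (w * m) ↔ Coprime (d * y + r) m := fun y => by
    refine coprime_mul_iff_right.trans (and_iff_right ?_)
    refine ((coprime_mul_left_add_left r d y).2 h).of_forall_prime_dvd_imp_dvd fun p hp hpw => ?_
    exact (mem_filter.1 (hw ▸ mem_primeFactors.2 ⟨hp, hpw, hw0⟩ :)).2
  have hperiodic : Periodic (fun y => Coprime (d * y + r) m) m := fun y => by
    dsimp only
    rw [mul_add, add_right_comm, mul_comm d m, eq_iff_iff]
    exact coprime_add_mul_left_left _ _ _
  have hcount : #{y ∈ Icc 1 (w * m) | Coprime (d * y + r) (w * m)} = w * φ m := by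
    rw [filter_congr fun y _ => hcoprime y, ← Ico_add_one_right_eq_Icc, add_comm,
      filter_Ico_card_eq_mul_count_of_periodic _ _ _ _ hperiodic, count_coprime_mul_add hdm]
  simp only [← coprime_iff_gcd_eq_one]
  rw [hcount, cast_mul, totient_eq_mul_prod_factors, hm, cast_mul, mul_assoc]
  simp only [one_div]

theorem stmt_2 (n d r : ℕ) (hn : 0 < n) (hd : 0 < d) (hr : 0 < r)
    (h : Nat.gcd r d = 1) :
    (((Finset.Icc 1 n).filter (fun y => Nat.gcd (d * y + r) n = 1)).card : ℚ) =
      (n : ℚ) * ∏ p ∈ n.primeFactors.filter (fun p => ¬ p ∣ d), (1 - 1 / (p : ℚ)) :=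
  stmt_2_general n d r hn h
end

section
/- Let m and k be positive integers with k ∣ m. Then ∑_{d ∣ m} ∑_{e ∣ m, gcd(d,e) = k} (μ(d)/d)·(μ(e)/e) = (|μ(k)|/k²) · ∏_{p prime, p ∣ m, p ∤ k} (1 − 2/p). -/
/-!
Only squarefree `d`, `e` contribute. Writing them as `∏ S` and `∏ T` for subsets `S`, `T` of the
set `P` of prime factors of `m`, the summand is `∏_{p ∈ S} (-1/p) · ∏_{p ∈ T} (-1/p)` and the
condition `gcd d e = k` reads `S ∩ T = K`, the set of prime factors of `k` (if `k` is not
squarefree, both sides vanish). Then `S = K ∪ S'`, `T = K ∪ T'` with `S'`, `T'` disjoint subsets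
of `P \ K`, and since every `p ∈ P \ K` lies in `S'`, in `T'` or in neither, the sum factors as
`(∏_{p ∈ K} 1/p)² · ∏_{p ∈ P \ K} (1 - 2/p)`.
-/

open Finset ArithmeticFunction
open scoped ArithmeticFunction.Moebius

namespace Finset

variable {ι R : Type*} [DecidableEq ι] [CommSemiring R]

theorem sum_powerset_sum_powerset_disjoint_prod_mul_prod (P : Finset ι) (f : ι → R) :
    ∑ S ∈ P.powerset, ∑ T ∈ P.powerset,
        (if Disjoint S T then (∏ i ∈ S, f i) * ∏ i ∈ T, f i else 0) =
      ∏ i ∈ P, (1 + 2 * f i) := by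
  have powerset_sdiff (S : Finset ι) : (P \ S).powerset = {T ∈ P.powerset | Disjoint S T} := by
    ext T
    simp [subset_sdiff, disjoint_comm]
  calc _ = ∑ S ∈ P.powerset, (∏ i ∈ S, f i) * ∑ T ∈ (P \ S).powerset, ∏ i ∈ T, f i := by
        refine sum_congr rfl fun S _ => ?_
        rw [← sum_filter, powerset_sdiff, mul_sum]
    _ = ∏ i ∈ P, (f i + (1 + f i)) := by rw [prod_add]; simp_rw [prod_one_add]
    _ = _ := prod_congr rfl fun _ _ => by ring

theorem sum_powerset_sum_powerset_inter_eq_prod_mul_prod {P U : Finset ι} (hU : U ⊆ P)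
    (f : ι → R) :
    ∑ S ∈ P.powerset, ∑ T ∈ P.powerset,
        (if S ∩ T = U then (∏ i ∈ S, f i) * ∏ i ∈ T, f i else 0) =
      (∏ i ∈ U, f i) ^ 2 * ∏ i ∈ P \ U, (1 + 2 * f i) := by
  rw [← sum_powerset_sum_powerset_disjoint_prod_mul_prod, mul_sum]
  simp_rw [mul_sum, mul_ite, mul_zero, ← sum_product', ← sum_filter]
  refine sum_nbij' (fun x => (x.1 \ U, x.2 \ U)) (fun y => (U ∪ y.1, U ∪ y.2)) ?_ ?_ ?_ ?_ ?_
  all_goals rintro ⟨S, T⟩ h; simp only [mem_filter, mem_product, mem_powerset] at h ⊢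
  iterate 4
    simp only [Prod.ext_iff, Finset.ext_iff, subset_iff, disjoint_left, mem_sdiff, mem_inter,
      mem_union] at h hU ⊢
    grind
  · have hS : U ⊆ S := h.2 ▸ inter_subset_left
    have hT : U ⊆ T := h.2 ▸ inter_subset_right
    rw [← prod_sdiff hS, ← prod_sdiff hT]
    ring

end Finset

namespace Nat

theorem sum_divisors_eq_sum_powerset_primeFactors {M : Type*} [AddCommMonoid M] {n : ℕ}
    (hn : n ≠ 0) {g : ℕ → M} (hg : ∀ d, ¬Squarefree d → g d = 0) :
    ∑ d ∈ n.divisors, g d = ∑ S ∈ n.primeFactors.powerset, g (∏ p ∈ S, p) := by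
  rw [← sum_filter_of_ne fun d _ hd => not_not.mp (mt (hg d) hd),
    sum_divisors_filter_squarefree hn, factors_eq]
  simp only [List.toFinset_coe, prod_val]
  rfl

theorem squarefree_prod_primes {S : Finset ℕ} (hS : ∀ p ∈ S, p.Prime) :
    Squarefree (∏ p ∈ S, p) := by
  rw [← moebius_ne_zero_iff_squarefree, isMultiplicative_moebius.map_prod_of_prime S hS]
  exact prod_ne_zero_iff.mpr fun p hp => by simp [moebius_apply_prime (hS p hp)]

theorem gcd_prod_primes_eq_iff {S T : Finset ℕ} (hS : ∀ p ∈ S, p.Prime)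
    (hT : ∀ p ∈ T, p.Prime) {k : ℕ} (hk : Squarefree k) :
    gcd (∏ p ∈ S, p) (∏ p ∈ T, p) = k ↔ S ∩ T = k.primeFactors := by
  have hg : Squarefree (gcd (∏ p ∈ S, p) (∏ p ∈ T, p)) := (squarefree_prod_primes hS).gcd_left _
  have hST : S ∩ T = (gcd (∏ p ∈ S, p) (∏ p ∈ T, p)).primeFactors := by
    rw [primeFactors_gcd (squarefree_prod_primes hS).ne_zero (squarefree_prod_primes hT).ne_zero,
      primeFactors_prod hS, primeFactors_prod hT]
  rw [hST]
  refine ⟨congrArg _, fun h => ?_⟩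
  rw [← prod_primeFactors_of_squarefree hg, h, prod_primeFactors_of_squarefree hk]

theorem moebius_div_prod_primes {K : Type*} [Field K] {S : Finset ℕ} (hS : ∀ p ∈ S, p.Prime) :
    (μ (∏ p ∈ S, p) : K) / (∏ p ∈ S, p : ℕ) = ∏ p ∈ S, (-1 / (p : K)) := by
  rw [isMultiplicative_moebius.map_prod_of_prime S hS, Int.cast_prod, Nat.cast_prod,
    ← prod_div_distrib]
  exact prod_congr rfl fun p hp => by simp [moebius_apply_prime (hS p hp)]

theorem sum_divisors_gcd_eq_sum_powerset_inter {K : Type*} [Field K] {m k : ℕ} (hm : m ≠ 0)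
    (hk : Squarefree k) :
    ∑ d ∈ m.divisors, ∑ e ∈ m.divisors,
        (if gcd d e = k then (μ d : K) / d * ((μ e : K) / e) else 0) =
      ∑ S ∈ m.primeFactors.powerset, ∑ T ∈ m.primeFactors.powerset,
        (if S ∩ T = k.primeFactors then
          (∏ p ∈ S, (-1 / (p : K))) * ∏ p ∈ T, (-1 / (p : K)) else 0) := by
  have hprime {S} (hS : S ∈ m.primeFactors.powerset) : ∀ p ∈ S, p.Prime :=
    fun p hp => prime_of_mem_primeFactors (mem_powerset.mp hS hp)
  rw [sum_divisors_eq_sum_powerset_primeFactors hm fun d hd => sum_eq_zero fun e _ => by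
    simp [moebius_eq_zero_of_not_squarefree hd]]
  refine sum_congr rfl fun S hS => ?_
  rw [sum_divisors_eq_sum_powerset_primeFactors hm fun e he => by
    simp [moebius_eq_zero_of_not_squarefree he]]
  refine sum_congr rfl fun T hT => ?_
  simp only [gcd_prod_primes_eq_iff (hprime hS) (hprime hT) hk,
    moebius_div_prod_primes (hprime hS), moebius_div_prod_primes (hprime hT)]

end Nat

theorem stmt_5_general (m k : ℕ) (hm : 0 < m) (hkm : k ∣ m) :
    ∑ d ∈ m.divisors, ∑ e ∈ m.divisors,
        (if Nat.gcd d e = k then ((ArithmeticFunction.moebius d : ℚ) / d) *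
          ((ArithmeticFunction.moebius e : ℚ) / e) else 0) =
      (|(ArithmeticFunction.moebius k : ℚ)| / (k : ℚ) ^ 2) *
        ∏ p ∈ m.primeFactors.filter (fun p => ¬ p ∣ k), (1 - 2 / (p : ℚ)) := by
  by_cases hk : Squarefree k
  · have hfilter :
        m.primeFactors \ k.primeFactors = m.primeFactors.filter (fun p => ¬ p ∣ k) := by
      ext p
      simp +contextual [Nat.mem_primeFactors, hk.ne_zero]
    have hμ : ((μ k : ℚ) / k) ^ 2 = |(μ k : ℚ)| / (k : ℚ) ^ 2 := by
      rw [div_pow, ← Int.cast_pow, moebius_sq_eq_one_of_squarefree hk, ← Int.cast_abs,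
        abs_moebius_eq_one_of_squarefree hk]
    rw [Nat.sum_divisors_gcd_eq_sum_powerset_inter hm.ne' hk,
      sum_powerset_sum_powerset_inter_eq_prod_mul_prod (Nat.primeFactors_mono hkm hm.ne'),
      ← Nat.moebius_div_prod_primes fun p => Nat.prime_of_mem_primeFactors,
      Nat.prod_primeFactors_of_squarefree hk, hμ, hfilter]
    exact congrArg _ (prod_congr rfl fun p _ => by ring)
  · rw [moebius_eq_zero_of_not_squarefree hk, Int.cast_zero, abs_zero, zero_div, zero_mul]
    refine sum_eq_zero fun d _ => sum_eq_zero fun e _ => ite_eq_right_iff.mpr fun hde => ?_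
    have hd : ¬Squarefree d := fun hd => hk (hd.squarefree_of_dvd (hde ▸ Nat.gcd_dvd_left d e))
    simp [moebius_eq_zero_of_not_squarefree hd]

theorem stmt_5 (m k : ℕ) (hm : 0 < m) (hk : 0 < k) (hkm : k ∣ m) :
    ∑ d ∈ m.divisors, ∑ e ∈ m.divisors,
        (if Nat.gcd d e = k then ((ArithmeticFunction.moebius d : ℚ) / d) *
          ((ArithmeticFunction.moebius e : ℚ) / e) else 0) =
      (|(ArithmeticFunction.moebius k : ℚ)| / (k : ℚ) ^ 2) *
        ∏ p ∈ m.primeFactors.filter (fun p => ¬ p ∣ k), (1 - 2 / (p : ℚ)) :=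
  stmt_5_general m k hm hkm
end

section
/- Let n be a positive integer with divisors a and b, g = gcd(a,b), and c ∈ ℤ/nℤ with g ∣ c. Set n' = n/g, a' = a/g, b' = b/g, c' = c/g. Then the map (ax, by) ↦ (a'x, b'y) is a bijection from S_{n;a,b}(c) onto S_{n';a',b'}(c'), and in particular N_{n;a,b}(c) = N_{n';a',b'}(c'). -/
/-!
Dividing `n, a, b, c` by a common divisor `g` does not change the ranges `n / a`, `n / b` of
`x` and `y`, and `a x + b y ≡ c [MOD n]` is `g` times `a' x + b' y ≡ c' [MOD n']`, so the two
sets of pairs `(x, y)` coincide.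
-/

/-- `S_{N;A,B}(C)` in the coordinates `(u, v) = (A x, B y)`. -/
def reprPairs (N A B C : ℕ) : Finset (ℕ × ℕ) :=
  (Finset.Icc 1 (N / A) ×ˢ Finset.Icc 1 (N / B)).filter
    (fun p => Nat.Coprime p.1 (N / A) ∧ Nat.Coprime p.2 (N / B) ∧
      (A * p.1 + B * p.2) % N = C % N)

theorem reprPairs_mul_left {N A B C g : ℕ} (hg : g ≠ 0) :
    reprPairs (g * N) (g * A) (g * B) (g * C) = reprPairs N A B C := by
  have hg' : 0 < g := Nat.pos_of_ne_zero hg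
  unfold reprPairs
  simp only [Nat.mul_div_mul_left _ _ hg']
  refine Finset.filter_congr fun p _ => and_congr_right' (and_congr_right' ?_)
  rw [mul_assoc, mul_assoc, ← mul_add]
  exact Nat.ModEq.mul_left_cancel_iff' hg

theorem reprPairs_div_of_dvd {N A B C g : ℕ} (hg : g ≠ 0) (hN : g ∣ N) (hA : g ∣ A)
    (hB : g ∣ B) (hC : g ∣ C) :
    reprPairs (N / g) (A / g) (B / g) (C / g) = reprPairs N A B C := by
  obtain ⟨N, rfl⟩ := hN
  obtain ⟨A, rfl⟩ := hA
  obtain ⟨B, rfl⟩ := hB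
  obtain ⟨C, rfl⟩ := hC
  simp only [Nat.mul_div_cancel_left _ (Nat.pos_of_ne_zero hg), reprPairs_mul_left hg]

theorem stmt_9_general (n a b c : ℕ) (hn : 0 < n) (ha : a ∣ n)
    (g : ℕ) (hg : g = Nat.gcd a b) (hc : g ∣ c)
    (S : ℕ → ℕ → ℕ → ℕ → Finset (ℕ × ℕ))
    (hS : ∀ N A B C, S N A B C =
      (Finset.Icc 1 (N / A) ×ˢ Finset.Icc 1 (N / B)).filter
        (fun p => Nat.Coprime p.1 (N / A) ∧ Nat.Coprime p.2 (N / B) ∧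
          (A * p.1 + B * p.2) % N = C % N)) :
    -- the map (a*x, b*y) ↦ (a'*x, b'*y), i.e. (x,y) ↦ (x,y) on representation
    -- pairs, is a bijection from S_{n;a,b}(c) onto S_{n';a',b'}(c'):
    S n a b c = S (n / g) (a / g) (b / g) (c / g) ∧
      (S n a b c).card = (S (n / g) (a / g) (b / g) (c / g)).card := by
  have hS' : S = reprPairs := funext₂ fun N A => funext₂ fun B C => hS N A B C
  have hga : g ∣ a := hg ▸ Nat.gcd_dvd_left a b
  have hg0 : g ≠ 0 := by
    rintro rfl
    exact (Nat.pos_of_dvd_of_pos ha hn).ne' (Nat.eq_zero_of_zero_dvd hga)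
  have hdiv := reprPairs_div_of_dvd hg0 (hga.trans ha) hga (hg ▸ Nat.gcd_dvd_right a b) hc
  rw [hS', hdiv]
  exact ⟨rfl, rfl⟩

/-- `S n a b c` is the set of representation pairs `(x, y)` with
`u = a*x ∈ atom(a)`, `v = b*y ∈ atom(b)` and `u + v ≡ c (mod n)`;
each element of `S_{n;a,b}(c) = {(ax, by) : ...}` corresponds uniquely to such a pair. -/
theorem stmt_9 (n a b c : ℕ) (hn : 0 < n) (ha : a ∣ n) (hb : b ∣ n)
    (g : ℕ) (hg : g = Nat.gcd a b) (hc : g ∣ c) (hcn : c < n)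
    (S : ℕ → ℕ → ℕ → ℕ → Finset (ℕ × ℕ))
    (hS : ∀ N A B C, S N A B C =
      (Finset.Icc 1 (N / A) ×ˢ Finset.Icc 1 (N / B)).filter
        (fun p => Nat.Coprime p.1 (N / A) ∧ Nat.Coprime p.2 (N / B) ∧
          (A * p.1 + B * p.2) % N = C % N)) :
    -- the map (a*x, b*y) ↦ (a'*x, b'*y), i.e. (x,y) ↦ (x,y) on representation
    -- pairs, is a bijection from S_{n;a,b}(c) onto S_{n';a',b'}(c'):
    S n a b c = S (n / g) (a / g) (b / g) (c / g) ∧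
      (S n a b c).card = (S (n / g) (a / g) (b / g) (c / g)).card :=
  stmt_9_general n a b c hn ha g hg hc S hS
end

section
/- For a positive integer n and c ∈ ℤ/nℤ, the number of pairs (x,y) of units of ℤ/nℤ with x + y = c equals n · ∏_{p prime, p ∣ n, p ∣ c} (1 − 1/p) · ∏_{p prime, p ∣ n, p ∤ c} (1 − 2/p). -/
/-!
Write `x + y = c` as `y = c - x`: we count the `x` for which `x` and `c - x` are both units.
The Chinese remainder theorem makes this count multiplicative in `n`. For `n = p ^ k`, being a
unit only depends on the residue mod `p`, so the count is `p ^ (k - 1)` times the number of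
residues mod `p` avoiding both `0` and `c`, namely `p - 1` if `p ∣ c` and `p - 2` otherwise.
-/

open Finset

noncomputable def unitSumCount (R : Type*) [Ring R] (c : R) : ℕ :=
  Nat.card {x : R // IsUnit x ∧ IsUnit (c - x)}

section UnitSum

variable {R S : Type*} [Ring R] [Ring S]

theorem card_units_add_eq_unitSumCount (c : R) :
    Nat.card {p : Rˣ × Rˣ // (p.1 : R) + p.2 = c} = unitSumCount R c := by
  refine Nat.card_congr
    { toFun := fun p => ⟨p.1.1, p.1.1.isUnit, ?_⟩
      invFun := fun x => ⟨(x.2.1.unit, x.2.2.unit), by simp⟩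
      left_inv := ?_
      right_inv := fun x => by simp }
  · simp [← p.2]
  · rintro ⟨⟨x, y⟩, h⟩
    ext <;> simp [← h]

theorem unitSumCount_congr (e : R ≃+* S) (c : R) : unitSumCount R c = unitSumCount S (e c) :=
  Nat.card_congr <| e.toEquiv.subtypeEquiv fun x => by
    simp [← map_sub]

theorem unitSumCount_prod (c : R × S) :
    unitSumCount (R × S) c = unitSumCount R c.1 * unitSumCount S c.2 := by
  rw [unitSumCount, unitSumCount, unitSumCount, ← Nat.card_prod]
  exact Nat.card_congr <| (Equiv.subtypeEquivRight fun x => by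
    simp only [Prod.isUnit_iff, Prod.fst_sub, Prod.snd_sub]; tauto).trans
    Equiv.subtypeProdEquivProd

end UnitSum

theorem AddMonoidHom.card_filter_mem_mul_card {G H : Type*} [AddGroup G] [Fintype G] [AddGroup H]
    [Fintype H] [DecidableEq H] (f : G →+ H) (hf : Function.Surjective f) (t : Finset H) :
    #{g | f g ∈ t} * Fintype.card H = #t * Fintype.card G := by
  have hfiber (y : H) : #{g | f g = y} = #{g | f g = 0} :=
    AddMonoidHom.card_fiber_eq_of_mem_range f (hf y) (hf 0)
  have hcount (t : Finset H) : #{g | f g ∈ t} = #t * #{g | f g = 0} := by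
    rw [← sum_card_fiberwise_eq_card_filter, sum_congr rfl fun y _ => hfiber y, sum_const,
      smul_eq_mul]
  have hG : Fintype.card G = Fintype.card H * #{g | f g = 0} := by
    simpa using hcount univ
  rw [hcount, hG]
  ring

theorem Finset.card_filter_ne_and_ne {α : Type*} [Fintype α] [DecidableEq α] (a b : α) :
    #{y | y ≠ a ∧ y ≠ b} = Fintype.card α - if b = a then 1 else 2 := by
  have : ({y | y ≠ a ∧ y ≠ b} : Finset α) = univ \ {a, b} := by ext; simp
  rw [this, card_sdiff_of_subset (subset_univ _), card_univ]
  split_ifs with h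
  · simp [h]
  · rw [card_pair (Ne.symm h)]

namespace ZMod

theorem val_castHom {m n : ℕ} [NeZero n] (h : m ∣ n) (c : ZMod n) :
    (castHom h (ZMod m) c).val = c.val % m := by
  rw [castHom_apply, ← natCast_val, val_natCast]

theorem dvd_val_castHom_iff {q m n : ℕ} [NeZero n] (hq : q ∣ m) (h : m ∣ n) (c : ZMod n) :
    q ∣ (castHom h (ZMod m) c).val ↔ q ∣ c.val := by
  rw [val_castHom, Nat.dvd_mod_iff hq]

theorem isUnit_iff_castHom_ne_zero {p k : ℕ} (hp : p.Prime) (hk : k ≠ 0) (x : ZMod (p ^ k)) :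
    IsUnit x ↔ castHom (dvd_pow_self p hk) (ZMod p) x ≠ 0 := by
  have : NeZero (p ^ k) := ⟨pow_ne_zero k hp.ne_zero⟩
  rw [← natCast_zmod_val x, isUnit_natCast_iff_not_dvd_pow hp (Nat.pos_of_ne_zero hk),
    map_natCast, Ne, natCast_eq_zero_iff]

theorem unitSumCount_primePow {p k : ℕ} (hp : p.Prime) (hk : k ≠ 0) (c : ZMod (p ^ k)) :
    unitSumCount (ZMod (p ^ k)) c * p = p ^ k * (p - if p ∣ c.val then 1 else 2) := by
  have : NeZero (p ^ k) := ⟨pow_ne_zero k hp.ne_zero⟩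
  have : NeZero p := ⟨hp.ne_zero⟩
  set π := castHom (dvd_pow_self p hk) (ZMod p)
  have hunits (x) : IsUnit x ∧ IsUnit (c - x) ↔
      π x ∈ ({y | y ≠ 0 ∧ y ≠ π c} : Finset (ZMod p)) := by
    simp only [isUnit_iff_castHom_ne_zero hp hk, map_sub, sub_ne_zero, mem_filter, mem_univ,
      true_and]
    exact and_congr_right' ne_comm
  have hc : π c = 0 ↔ p ∣ c.val := by
    rw [← val_eq_zero, val_castHom, Nat.dvd_iff_mod_eq_zero]
  have hcount := π.toAddMonoidHom.card_filter_mem_mul_card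
    (castHom_surjective (dvd_pow_self p hk)) {y | y ≠ 0 ∧ y ≠ π c}
  simp only [Finset.card_filter_ne_and_ne, ZMod.card, hc] at hcount
  rw [unitSumCount, Nat.card_eq_fintype_card, Fintype.card_subtype,
    filter_congr fun x _ => hunits x, mul_comm (p ^ k)]
  exact hcount

theorem unitSumCount_mul {a b : ℕ} (hab : a.Coprime b) (c : ZMod (a * b)) :
    unitSumCount (ZMod (a * b)) c =
      unitSumCount (ZMod a) (castHom (dvd_mul_right a b) _ c) *
        unitSumCount (ZMod b) (castHom (dvd_mul_left b a) _ c) := by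
  have hfst : (chineseRemainder hab c).1 = castHom (dvd_mul_right a b) _ c :=
    RingHom.congr_fun
      (RingHom.ext_zmod ((RingHom.fst _ _).comp (chineseRemainder hab).toRingHom) _) c
  have hsnd : (chineseRemainder hab c).2 = castHom (dvd_mul_left b a) _ c :=
    RingHom.congr_fun
      (RingHom.ext_zmod ((RingHom.snd _ _).comp (chineseRemainder hab).toRingHom) _) c
  rw [unitSumCount_congr (chineseRemainder hab), unitSumCount_prod, hfst, hsnd]

theorem unitSumCount_eq_mul_prod {n : ℕ} (hn : n ≠ 0) (c : ZMod n) :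
    (unitSumCount (ZMod n) c : ℚ) =
      n * ∏ p ∈ n.primeFactors, if p ∣ c.val then 1 - 1 / (p : ℚ) else 1 - 2 / p := by
  induction n using Nat.recOnPosPrimePosCoprime with
  | zero => exact absurd rfl hn
  | one =>
    have : Unique {x : ZMod 1 // IsUnit x ∧ IsUnit (c - x)} :=
      ⟨⟨⟨0, isUnit_of_subsingleton _, isUnit_of_subsingleton _⟩⟩,
        fun _ => Subsingleton.elim _ _⟩
    rw [unitSumCount, Nat.card_unique]
    simp
  | prime_pow p k hp hk =>
    have hp0 : (p : ℚ) ≠ 0 := mod_cast hp.ne_zero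
    have hcount := congrArg (Nat.cast (R := ℚ)) (unitSumCount_primePow hp hk.ne' c)
    rw [Nat.primeFactors_prime_pow hk.ne' hp, prod_singleton]
    split_ifs at hcount ⊢ <;>
      · push_cast [Nat.cast_sub hp.one_le, Nat.cast_sub hp.two_le] at hcount
        push_cast
        field_simp
        linear_combination hcount
  | coprime a b ha hb hab iha ihb =>
    have : NeZero (a * b) := ⟨hn⟩
    rw [unitSumCount_mul hab, Nat.cast_mul, iha (by omega), ihb (by omega),
      Nat.Coprime.primeFactors_mul hab, prod_union hab.disjoint_primeFactors, Nat.cast_mul]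
    have hcast {m : ℕ} (h : m ∣ a * b) :
        ∏ p ∈ m.primeFactors,
          (if p ∣ (castHom h (ZMod m) c).val then 1 - 1 / (p : ℚ) else 1 - 2 / p) =
        ∏ p ∈ m.primeFactors, if p ∣ c.val then 1 - 1 / (p : ℚ) else 1 - 2 / p :=
      prod_congr rfl fun p hp => by
        simp only [dvd_val_castHom_iff (Nat.dvd_of_mem_primeFactors hp)]
    rw [hcast, hcast]
    ring

end ZMod

theorem stmt_13 (n : ℕ) (hn : 0 < n) (c : ZMod n) :
    (Nat.card {p : (ZMod n)ˣ × (ZMod n)ˣ // (p.1 : ZMod n) + (p.2 : ZMod n) = c} : ℚ) =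
      (n : ℚ) * (∏ p ∈ n.primeFactors.filter (fun p => p ∣ c.val), (1 - 1 / (p : ℚ)))
        * (∏ p ∈ n.primeFactors.filter (fun p => ¬ p ∣ c.val), (1 - 2 / (p : ℚ))) := by
  rw [card_units_add_eq_unitSumCount, ZMod.unitSumCount_eq_mul_prod hn.ne', prod_ite, mul_assoc]
end

section
/- Let n be a positive integer with divisors a and b, g = gcd(a,b), n' = n/g, a' = a/g, b' = b/g. For c ∈ ℤ/nℤ, c lies in atom(a) + atom(b) if and only if: (i) g ∣ c; (ii) gcd(c', a'b') = 1 where c' = c/g; and (iii) n' is odd or a'b'c' is even. -/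
/-!
Write `a = g a'`, `b = g b'`, `n = g n'`. Every element `a x + b y` of `atom a + atom b` is
divisible by `g`, and dividing by `g` leaves the coprime case: `c' ≡ a' x + b' y (mod n')` with
`x` prime to `n' / a'` and `y` prime to `n' / b'`. Necessity of the conditions is read off modulo
`a'`, `b'` and `2`. For sufficiency it is enough to write `c' = a' X + b' Y` with units `X, Y` of
`ℤ/n'`. By the Chinese remainder theorem this is a question modulo prime powers `p ^ k`; there,
with `p ∤ b'` say, take `X = ±1` and solve for `Y`. The sign `-1` is needed only when
`p ∣ c' - a'`, and the parity condition makes `p` odd in that case.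
-/

open scoped Pointwise

def atom (n a : ℕ) : Set (ZMod n) :=
  {z | ∃ x : ℕ, 1 ≤ x ∧ x ≤ n / a ∧ Nat.Coprime x (n / a) ∧ z = (a : ZMod n) * x}

theorem exists_mem_Icc_coprime_modEq {q x : ℕ} (hq : 0 < q) (hx : x.Coprime q) :
    ∃ y, 1 ≤ y ∧ y ≤ q ∧ y.Coprime q ∧ y ≡ x [MOD q] := by
  rcases (Nat.one_le_iff_ne_zero.mpr hq.ne').lt_or_eq with hq1 | rfl
  · refine ⟨x % q, Nat.pos_of_ne_zero fun h0 ↦ ?_, (Nat.mod_lt x hq).le,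
      (ZMod.coprime_mod_iff_coprime x q).mpr hx, Nat.mod_modEq x q⟩
    exact hq1.ne' (hx.symm.eq_one_of_dvd (Nat.dvd_of_mod_eq_zero h0))
  · exact ⟨1, le_rfl, le_rfl, Nat.coprime_one_left 1, Nat.modEq_one⟩

theorem mem_atom_iff {n a : ℕ} (hn : 0 < n) (ha : a ∣ n) {z : ZMod n} :
    z ∈ atom n a ↔ ∃ x : ℕ, x.Coprime (n / a) ∧ z = a * x := by
  constructor
  · rintro ⟨x, -, -, hx, rfl⟩
    exact ⟨x, hx, rfl⟩
  · rintro ⟨x, hx, rfl⟩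
    obtain ⟨y, hy1, hyq, hy, hyx⟩ := exists_mem_Icc_coprime_modEq
      (Nat.div_pos (Nat.le_of_dvd hn ha) (Nat.pos_of_dvd_of_pos ha hn)) hx
    have hxy : a * x ≡ a * y [MOD n] := by
      simpa [Nat.mul_div_cancel' ha] using hyx.symm.mul_left' a
    exact ⟨y, hy1, hyq, hy, by exact_mod_cast (ZMod.natCast_eq_natCast_iff _ _ _).mpr hxy⟩

theorem mem_atom_add_atom_iff {n a b : ℕ} (hn : 0 < n) (ha : a ∣ n) (hb : b ∣ n) (c : ZMod n) :
    c ∈ atom n a + atom n b ↔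
      ∃ x y : ℕ, x.Coprime (n / a) ∧ y.Coprime (n / b) ∧ a * x + b * y ≡ c.val [MOD n] := by
  have : NeZero n := ⟨hn.ne'⟩
  simp only [Set.mem_add, mem_atom_iff hn ha, mem_atom_iff hn hb, ← ZMod.natCast_eq_natCast_iff,
    ZMod.natCast_zmod_val, Nat.cast_add, Nat.cast_mul]
  constructor
  · rintro ⟨-, ⟨x, hx, rfl⟩, -, ⟨y, hy, rfl⟩, h⟩
    exact ⟨x, y, hx, hy, h⟩
  · rintro ⟨x, y, hx, hy, h⟩
    exact ⟨_, ⟨x, hx, rfl⟩, _, ⟨y, hy, rfl⟩, h⟩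

theorem mul_modEq_iff_dvd_and_modEq_div {g m c n : ℕ} (hg : 0 < g) :
    g * m ≡ c [MOD g * n] ↔ g ∣ c ∧ m ≡ c / g [MOD n] := by
  constructor
  · intro h
    have hgc : g ∣ c := (h.dvd_iff (dvd_mul_right g n)).mp (dvd_mul_right g m)
    refine ⟨hgc, Nat.ModEq.mul_left_cancel' hg.ne' ?_⟩
    rwa [Nat.mul_div_cancel' hgc]
  · rintro ⟨⟨k, rfl⟩, h⟩
    rw [Nat.mul_div_cancel_left k hg] at h
    exact h.mul_left' g

def IsUnitLinComb (m : ℕ) (A B C : ℤ) : Prop :=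
  ∃ X Y : ZMod m, IsUnit X ∧ IsUnit Y ∧ (A : ZMod m) * X + B * Y = C

namespace IsUnitLinComb

variable {m : ℕ} {A B C : ℤ}

theorem swap (h : IsUnitLinComb m A B C) : IsUnitLinComb m B A C :=
  let ⟨X, Y, hX, hY, hXY⟩ := h
  ⟨Y, X, hY, hX, by rw [add_comm, hXY]⟩

theorem of_isUnit_sub {X : ZMod m} (hB : IsUnit (B : ZMod m)) (hX : IsUnit X)
    (hCX : IsUnit ((C : ZMod m) - A * X)) : IsUnitLinComb m A B C :=
  ⟨X, ↑hB.unit⁻¹ * (C - A * X), hX, hB.unit⁻¹.isUnit.mul hCX, by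
    rw [← mul_assoc, IsUnit.mul_val_inv, one_mul, add_sub_cancel]⟩

theorem mul {m₁ m₂ : ℕ} (hm : m₁.Coprime m₂) (h₁ : IsUnitLinComb m₁ A B C)
    (h₂ : IsUnitLinComb m₂ A B C) : IsUnitLinComb (m₁ * m₂) A B C := by
  obtain ⟨X₁, Y₁, hX₁, hY₁, h₁⟩ := h₁
  obtain ⟨X₂, Y₂, hX₂, hY₂, h₂⟩ := h₂
  let e := ZMod.chineseRemainder hm
  refine ⟨e.symm (X₁, X₂), e.symm (Y₁, Y₂), (Prod.isUnit_iff.mpr ⟨hX₁, hX₂⟩).map e.symm,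
    (Prod.isUnit_iff.mpr ⟨hY₁, hY₂⟩).map e.symm, e.injective ?_⟩
  ext <;> simp [h₁, h₂]

end IsUnitLinComb

theorem ZMod.isUnit_intCast_prime_pow_iff {p k : ℕ} (hp : p.Prime) (hk : 0 < k) (z : ℤ) :
    IsUnit (z : ZMod (p ^ k)) ↔ ¬ (p : ℤ) ∣ z := by
  rw [ZMod.coe_int_isUnit_iff_isCoprime, Nat.cast_pow, IsCoprime.pow_left_iff hk,
    (Nat.prime_iff_prime_int.mp hp).irreducible.coprime_iff_not_dvd]

theorem isUnitLinComb_prime_pow {p k : ℕ} (hp : p.Prime) (hk : 0 < k) {A B C : ℤ}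
    (hAB : IsCoprime A B) (hC : IsCoprime C (A * B)) (hpar : Odd (p ^ k) ∨ 2 ∣ A * B * C) :
    IsUnitLinComb (p ^ k) A B C := by
  have hpZ : Prime (p : ℤ) := Nat.prime_iff_prime_int.mp hp
  wlog hB : ¬ (p : ℤ) ∣ B generalizing A B
  · have hA : ¬ (p : ℤ) ∣ A := fun hA ↦ hpZ.not_isUnit (hAB.isUnit_of_dvd' hA (not_not.mp hB))
    rw [mul_comm A B] at hC hpar
    exact (this hAB.symm hC hpar hA).swap
  have hunit := ZMod.isUnit_intCast_prime_pow_iff hp hk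
  have hB' : IsUnit (B : ZMod (p ^ k)) := (hunit B).mpr hB
  by_cases hCA : (p : ℤ) ∣ C - A
  · have hA : ¬ (p : ℤ) ∣ A := fun hA ↦
      hpZ.not_isUnit (hC.isUnit_of_dvd' (by simpa using dvd_add hCA hA) (hA.mul_right B))
    have hp2 : ¬ (p : ℤ) ∣ 2 := by
      intro h2
      obtain rfl : p = 2 := (Nat.prime_dvd_prime_iff_eq hp Nat.prime_two).mp (by exact_mod_cast h2)
      have hC2 : (2 : ℤ) ∣ C := by
        push_cast at hA hB
        rcases hpar with hodd | hABC
        · exact absurd hodd (by simp [Nat.even_pow, hk.ne'])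
        · simpa [Int.prime_two.dvd_mul, hA, hB] using hABC
      exact hA (by simpa using dvd_sub hC2 hCA)
    have hCA' : ¬ (p : ℤ) ∣ C - A * -1 := fun h ↦ by
      have h2A := dvd_sub h hCA
      rw [show C - A * -1 - (C - A) = 2 * A by ring] at h2A
      exact (hpZ.dvd_or_dvd h2A).elim hp2 hA
    exact .of_isUnit_sub (X := ((-1 : ℤ) : ZMod (p ^ k))) hB' (by simp)
      (by exact_mod_cast (hunit _).mpr hCA')
  · exact .of_isUnit_sub (X := 1) hB' isUnit_one (by simpa using (hunit (C - A)).mpr hCA)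

theorem isUnitLinComb_of_isCoprime {A B C : ℤ} (hAB : IsCoprime A B) (hC : IsCoprime C (A * B))
    {m : ℕ} (hm : 0 < m) (hpar : Odd m ∨ 2 ∣ A * B * C) : IsUnitLinComb m A B C := by
  induction m using Nat.recOnPosPrimePosCoprime with
  | prime_pow p k hp hk => exact isUnitLinComb_prime_pow hp hk hAB hC hpar
  | zero => exact absurd hm (lt_irrefl 0)
  | one => exact ⟨1, 1, isUnit_one, isUnit_one, Subsingleton.elim _ _⟩
  | coprime m₁ m₂ h₁ h₂ hm₁₂ ih₁ ih₂ =>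
    exact .mul hm₁₂ (ih₁ (by omega) (hpar.imp_left Nat.Odd.of_mul_left))
      (ih₂ (by omega) (hpar.imp_left Nat.Odd.of_mul_right))

theorem coprime_of_mul_add_mul_modEq {a b c x y : ℕ} (h : a * x + b * y ≡ c [MOD a])
    (hb : b.Coprime a) (hy : y.Coprime a) : c.Coprime a := by
  have hby : (b * y + a * x).Coprime a :=
    (Nat.coprime_add_mul_left_left _ _ _).mpr (hb.mul_left hy)
  rwa [Nat.Coprime, ← h.gcd_eq, add_comm]

theorem even_of_mul_add_mul_modEq {n a b c x y : ℕ} (ha : a ∣ n) (hb : b ∣ n) (hn : Even n)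
    (ha2 : Odd a) (hb2 : Odd b) (hx : x.Coprime (n / a)) (hy : y.Coprime (n / b))
    (h : a * x + b * y ≡ c [MOD n]) : Even c := by
  have odd_of_coprime {d z : ℕ} (hd : d ∣ n) (hd2 : Odd d) (hz : z.Coprime (n / d)) : Odd z := by
    have h2 : 2 ∣ n / d := hd2.coprime_two_left.dvd_of_dvd_mul_left
      (by rwa [Nat.mul_div_cancel' hd, ← even_iff_two_dvd])
    exact (hz.coprime_dvd_right h2).odd_of_right
  have hsum : Even (a * x + b * y) :=
    (ha2.mul (odd_of_coprime ha ha2 hx)).add_odd (hb2.mul (odd_of_coprime hb hb2 hy))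
  exact even_iff_two_dvd.mpr ((h.dvd_iff hn.two_dvd).mp (even_iff_two_dvd.mp hsum))

theorem exists_coprime_mul_add_mul_modEq_iff {n a b c : ℕ} (hn : 0 < n) (ha : a ∣ n)
    (hb : b ∣ n) (hab : a.Coprime b) :
    (∃ x y : ℕ, x.Coprime (n / a) ∧ y.Coprime (n / b) ∧ a * x + b * y ≡ c [MOD n]) ↔
      c.Coprime (a * b) ∧ (Odd n ∨ Even (a * b * c)) := by
  have habn : a * b ∣ n := hab.mul_dvd_of_dvd_of_dvd ha hb
  constructor
  · rintro ⟨x, y, hx, hy, h⟩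
    have hya : y.Coprime a := hy.coprime_dvd_right (Nat.dvd_div_of_mul_dvd (mul_comm a b ▸ habn))
    have hxb : x.Coprime b := hx.coprime_dvd_right (Nat.dvd_div_of_mul_dvd habn)
    have hcb : c.Coprime b :=
      coprime_of_mul_add_mul_modEq (add_comm (a * x) _ ▸ h.of_dvd hb) hab hxb
    refine ⟨(coprime_of_mul_add_mul_modEq (h.of_dvd ha) hab.symm hya).mul_right hcb, ?_⟩
    rcases Nat.even_or_odd n with hn2 | hn2
    · by_cases hab2 : Even (a * b)
      · exact .inr (hab2.mul_right c)
      · obtain ⟨ha2, hb2⟩ := Nat.odd_mul.mp (Nat.not_even_iff_odd.mp hab2)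
        exact .inr ((even_of_mul_add_mul_modEq ha hb hn2 ha2 hb2 hx hy h).mul_left _)
    · exact .inl hn2
  · rintro ⟨hc, hpar⟩
    have : NeZero n := ⟨hn.ne'⟩
    obtain ⟨X, Y, hX, hY, hXY⟩ := isUnitLinComb_of_isCoprime (A := a) (B := b) (C := c)
      (Nat.isCoprime_iff_coprime.mpr hab) (by exact_mod_cast Nat.isCoprime_iff_coprime.mpr hc) hn
      (hpar.imp_right fun h ↦ by exact_mod_cast h.two_dvd)
    have val_coprime {Z : ZMod n} (hZ : IsUnit Z) {d : ℕ} (hd : d ∣ n) : Z.val.Coprime (n / d) :=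
      ((ZMod.isUnit_iff_coprime _ _).mp (by rwa [ZMod.natCast_zmod_val])).coprime_dvd_right
        (Nat.div_dvd_of_dvd hd)
    refine ⟨X.val, Y.val, val_coprime hX ha, val_coprime hY hb, ?_⟩
    rw [← ZMod.natCast_eq_natCast_iff]
    simpa using hXY

theorem stmt_16 (n a b : ℕ) (hn : 0 < n) (ha : a ∣ n) (hb : b ∣ n)
    (g : ℕ) (hg : g = Nat.gcd a b) (c : ZMod n) :
    (∃ u v : ZMod n,
      u ∈ {z : ZMod n | ∃ x : ℕ, 1 ≤ x ∧ x ≤ n / a ∧ Nat.Coprime x (n / a) ∧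
        z = (a : ZMod n) * x} ∧
      v ∈ {z : ZMod n | ∃ y : ℕ, 1 ≤ y ∧ y ≤ n / b ∧ Nat.Coprime y (n / b) ∧
        z = (b : ZMod n) * y} ∧
      u + v = c) ↔
    (g ∣ c.val ∧ Nat.Coprime (c.val / g) ((a / g) * (b / g)) ∧
      (Odd (n / g) ∨ Even ((a / g) * (b / g) * (c.val / g)))) := by
  have hsumset : (∃ u v, u ∈ atom n a ∧ v ∈ atom n b ∧ u + v = c) ↔ c ∈ atom n a + atom n b := by
    simp only [Set.mem_add, exists_and_left]
  change (∃ u v, u ∈ atom n a ∧ v ∈ atom n b ∧ u + v = c) ↔ _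
  rw [hsumset, mem_atom_add_atom_iff hn ha hb]
  have hg0 : 0 < g := hg ▸ Nat.gcd_pos_of_pos_left b (Nat.pos_of_dvd_of_pos ha hn)
  obtain ⟨a', rfl⟩ : g ∣ a := hg ▸ Nat.gcd_dvd_left a b
  obtain ⟨b', rfl⟩ : g ∣ b := hg ▸ Nat.gcd_dvd_right _ _
  obtain ⟨n', rfl⟩ : g ∣ n := (dvd_mul_right g a').trans ha
  have hab : a'.Coprime b' := by
    rw [Nat.gcd_mul_left] at hg
    exact (Nat.mul_eq_left hg0.ne').mp hg.symm
  simp only [Nat.mul_div_cancel_left _ hg0, Nat.mul_div_mul_left _ _ hg0, mul_assoc g,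
    ← mul_add, mul_modEq_iff_dvd_and_modEq_div hg0]
  rw [← exists_coprime_mul_add_mul_modEq_iff (Nat.pos_of_mul_pos_left hn)
    (Nat.dvd_of_mul_dvd_mul_left hg0 ha) (Nat.dvd_of_mul_dvd_mul_left hg0 hb) hab]
  exact ⟨fun ⟨x, y, hx, hy, hgc, h⟩ ↦ ⟨hgc, x, y, hx, hy, h⟩,
    fun ⟨hgc, x, y, hx, hy, h⟩ ↦ ⟨x, y, hx, hy, hgc, h⟩⟩
end

section
/- Let n be a positive integer with divisors a and b, and let I be an additive subgroup (ideal) of ℤ/nℤ. Then the number of representations c = u + v with u ∈ atom(a), v ∈ atom(b) is the same for all c in the set of generators of I; i.e., N_{n;a,b}(u) = N_{n;a,b}(v) for any two generators u, v of I. -/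
/-!
Two generators `u`, `v` of the same subgroup of `ℤ/nℤ` differ by a unit: writing `u = α d` and
`v = β e` with `α, β` units and `d, e ∣ n`, the equality `⟨d⟩ = ⟨e⟩` lifts to `e ≡ k d mod n`,
so `d ∣ e` because `d ∣ n`; symmetrically `e ∣ d`.
Multiplication by a unit `t` preserves every cyclic subgroup, so `(p, q) ↦ (t p, t q)` maps the
representations of `u` bijectively onto those of `t u = v`.
-/

open AddSubgroup

namespace ZMod

variable {n : ℕ}

theorem mul_mem_zmultiples (c x : ZMod n) : c * x ∈ zmultiples x :=
  mem_zmultiples_iff.2 ⟨(c.cast : ℤ), by rw [zsmul_eq_mul, intCast_zmod_cast]⟩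

theorem zmultiples_mul_of_isUnit {c : ZMod n} (hc : IsUnit c) (x : ZMod n) :
    zmultiples (c * x) = zmultiples x := by
  obtain ⟨t, rfl⟩ := hc
  refine le_antisymm (zmultiples_le.2 (mul_mem_zmultiples _ _)) (zmultiples_le.2 ?_)
  simpa only [← mul_assoc, Units.inv_mul, one_mul] using mul_mem_zmultiples (↑t⁻¹ : ZMod n) (t * x)

theorem dvd_of_natCast_mem_zmultiples {d e : ℕ} (hd : d ∣ n)
    (h : (e : ZMod n) ∈ zmultiples (d : ZMod n)) : d ∣ e := by
  obtain ⟨k, hk⟩ := mem_zmultiples_iff.1 h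
  rw [zsmul_eq_mul, ← Int.cast_natCast, ← Int.cast_mul, ← Int.cast_natCast e,
    intCast_eq_intCast_iff_dvd_sub] at hk
  have hde : (d : ℤ) ∣ e - k * d := (Int.natCast_dvd_natCast.2 hd).trans hk
  exact Int.natCast_dvd_natCast.1 ((dvd_sub_left (dvd_mul_left _ _)).1 hde)

theorem exists_unit_mul_eq_of_zmultiples_eq {u v : ZMod n}
    (h : zmultiples u = zmultiples v) : ∃ t : (ZMod n)ˣ, t * u = v := by
  obtain ⟨d, hd, α, hα, rfl⟩ := eq_unit_mul_divisor u
  obtain ⟨e, he, β, hβ, rfl⟩ := eq_unit_mul_divisor v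
  rw [zmultiples_mul_of_isUnit hα, zmultiples_mul_of_isUnit hβ] at h
  have hed : d = e := Nat.dvd_antisymm
    (dvd_of_natCast_mem_zmultiples hd (h ▸ mem_zmultiples _))
    (dvd_of_natCast_mem_zmultiples he (h ▸ mem_zmultiples _))
  subst hed
  refine ⟨hβ.unit * hα.unit⁻¹, ?_⟩
  rw [Units.val_mul, ← mul_assoc, mul_assoc _ _ α, hα.val_inv_mul, mul_one, hβ.unit_spec]

theorem card_generating_pairs_with_sum_unit_mul (t : (ZMod n)ˣ) (x y c : ZMod n) :
    Nat.card {p : ZMod n × ZMod n // zmultiples p.1 = zmultiples x ∧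
      zmultiples p.2 = zmultiples y ∧ p.1 + p.2 = t * c} =
    Nat.card {p : ZMod n × ZMod n // zmultiples p.1 = zmultiples x ∧
      zmultiples p.2 = zmultiples y ∧ p.1 + p.2 = c} := by
  refine Nat.card_congr (Equiv.subtypeEquiv
    ((Units.mulLeft t⁻¹).prodCongr (Units.mulLeft t⁻¹)) fun p => ?_)
  simp only [Equiv.prodCongr_apply, Prod.map_fst, Prod.map_snd, Units.mulLeft_apply,
    zmultiples_mul_of_isUnit (Units.isUnit _), ← mul_add, Units.inv_mul_eq_iff_eq_mul]

end ZMod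

theorem stmt_17_general (n a b : ℕ)
    (I : AddSubgroup (ZMod n))
    (N : ZMod n → ℕ)
    (hN : ∀ c : ZMod n, N c = Nat.card {p : ZMod n × ZMod n //
      AddSubgroup.zmultiples p.1 = AddSubgroup.zmultiples (a : ZMod n) ∧
      AddSubgroup.zmultiples p.2 = AddSubgroup.zmultiples (b : ZMod n) ∧
      p.1 + p.2 = c})
    (u v : ZMod n) (hu : AddSubgroup.zmultiples u = I)
    (hv : AddSubgroup.zmultiples v = I) :
    N u = N v := by
  obtain ⟨t, rfl⟩ := ZMod.exists_unit_mul_eq_of_zmultiples_eq (hu.trans hv.symm)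
  rw [hN, hN, ZMod.card_generating_pairs_with_sum_unit_mul]

theorem stmt_17 (n a b : ℕ) (hn : 0 < n) (ha : a ∣ n) (hb : b ∣ n)
    (I : AddSubgroup (ZMod n))
    (N : ZMod n → ℕ)
    (hN : ∀ c : ZMod n, N c = Nat.card {p : ZMod n × ZMod n //
      AddSubgroup.zmultiples p.1 = AddSubgroup.zmultiples (a : ZMod n) ∧
      AddSubgroup.zmultiples p.2 = AddSubgroup.zmultiples (b : ZMod n) ∧
      p.1 + p.2 = c})
    (u v : ZMod n) (hu : AddSubgroup.zmultiples u = I)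
    (hv : AddSubgroup.zmultiples v = I) :
    N u = N v :=
  stmt_17_general n a b I N hN u v hu hv
end

section
/- Let n be a positive integer with divisors a and b, g = gcd(a,b), n' = n/g, a' = a/g, b' = b/g, and suppose n' is even and a'b' is odd. Let m̃₃ be the largest divisor of n'/(a'b') coprime to a'b'. Then atom(a) + atom(b) = ⋃_{d ∣ m̃₃, d even} atom(g·d), a disjoint union over the even divisors d of m̃₃. -/
/-!
Write `n = g n'`, `a = g a'`, `b = g b'`. For a divisor `e ∣ n`, the atom of `e` consists of the
residues `e k` with `k` coprime to `n / e`, i.e. of the `z` with `gcd(z, n) = e`. So a sum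
`g a' k + g b' l` of elements of the two atoms lies in the atom of `g d` with
`d = gcd(a' k + b' l, n')`.
This `d` is coprime to `a' b'` (a prime dividing `a'` and `a' k + b' l` divides `l` and `n' / b'`),
and it is even because `a'`, `b'`, `k`, `l` are odd while `n'` is even. The divisors of `n'`
coprime to `a' b'` are closed under `lcm`, so they are exactly the divisors of the largest one,
`m̃₃`.

Conversely, for `c = g d w` with `w` coprime to `n' / d` we solve `a' k + b' l = d w` with `k`, `l`
coprime to `n'`: modulo each prime `p ∣ n'` some member `k₀ + b' j`, `l₀ - a' j` of the family of
solutions has both entries nonzero (for `p = 2` because `d w` is even), and the Chinese remainder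
theorem glues these residues of `j`.
-/

open AddSubgroup
open scoped Pointwise

theorem exists_add_mul_ne_zero_and_sub_mul_ne_zero {F : Type*} [Field F] {a b k₀ l₀ : F}
    (hk : k₀ ≠ 0 ∨ b ≠ 0) (hl : l₀ ≠ 0 ∨ a ≠ 0) (h2 : (2 : F) = 0 → a * k₀ + b * l₀ = 0) :
    ∃ j, k₀ + b * j ≠ 0 ∧ l₀ - a * j ≠ 0 := by
  rcases eq_or_ne b 0 with rfl | hb
  · refine ⟨(l₀ - 1) / a, by simpa using hk, ?_⟩
    rcases eq_or_ne a 0 with rfl | ha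
    · simpa using hl
    · rw [mul_div_cancel₀ _ ha]; simp
  rcases eq_or_ne a 0 with rfl | ha
  · refine ⟨(1 - k₀) / b, ?_, by simpa using hl⟩
    rw [mul_div_cancel₀ _ hb]; simp
  by_cases hz : a * k₀ + b * l₀ = 0
  · refine ⟨1 - k₀ / b, ?_, ?_⟩
    · rwa [mul_sub, mul_one, mul_div_cancel₀ _ hb, add_sub_cancel]
    · have : l₀ - a * (1 - k₀ / b) = -a := by field_simp; linear_combination hz
      rwa [this, neg_ne_zero]
  · have h2' : (2 : F) ≠ 0 := fun h => hz (h2 h)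
    -- the zeros `-k₀ / b` and `l₀ / a` of the two factors differ; reflect the first in the second
    refine ⟨2 * l₀ / a + k₀ / b, ?_, ?_⟩
    · have : k₀ + b * (2 * l₀ / a + k₀ / b) = 2 * (a * k₀ + b * l₀) / a := by field_simp; ring
      rw [this]; exact div_ne_zero (mul_ne_zero h2' hz) ha
    · have : l₀ - a * (2 * l₀ / a + k₀ / b) = -(a * k₀ + b * l₀) / b := by field_simp; ring
      rw [this]; exact div_ne_zero (neg_ne_zero.mpr hz) hb

theorem Nat.exists_forall_mem_primeFactors (N : ℕ) (P : ∀ p : ℕ, ZMod p → Prop)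
    (h : ∀ p ∈ N.primeFactors, ∃ j, P p j) : ∃ j : ℕ, ∀ p ∈ N.primeFactors, P p j := by
  -- quantified this way so that `choose` yields a function of `p` alone
  have hJ (p : ℕ) : ∃ j : ZMod p, p ∈ N.primeFactors → P p j := by
    by_cases hp : p ∈ N.primeFactors
    · obtain ⟨j, hj⟩ := h p hp
      exact ⟨j, fun _ => hj⟩
    · exact ⟨0, fun hp' => absurd hp' hp⟩
  choose J hJ using hJ
  obtain ⟨j, hj⟩ := Nat.chineseRemainderOfFinset (fun p => (J p).val) id N.primeFactors
    (fun p hp => (Nat.prime_of_mem_primeFactors hp).ne_zero)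
    (fun p hp q hq hpq => (Nat.coprime_primes (Nat.prime_of_mem_primeFactors hp)
      (Nat.prime_of_mem_primeFactors hq)).mpr hpq)
  refine ⟨j, fun p hp => ?_⟩
  have : NeZero p := ⟨(Nat.prime_of_mem_primeFactors hp).ne_zero⟩
  rw [(ZMod.natCast_eq_natCast_iff _ _ _).mpr (hj p hp), ZMod.natCast_zmod_val]
  exact hJ p hp

theorem Int.isCoprime_of_forall_prime {x : ℤ} {N : ℕ}
    (h : ∀ p : ℕ, p.Prime → p ∣ N → (x : ZMod p) ≠ 0) : IsCoprime x N := by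
  rw [Int.isCoprime_iff_nat_coprime, Int.natAbs_natCast]
  refine Nat.coprime_of_dvd fun p hp hpx hpN => h p hp hpN ?_
  rw [ZMod.intCast_zmod_eq_zero_iff_dvd]
  exact Int.natCast_dvd.mpr hpx

theorem Int.exists_mul_add_mul_eq_isCoprime {N : ℕ} (hN : N ≠ 0) {a b z : ℤ}
    (hab : IsCoprime a b) (hz : IsCoprime z (a * b)) (h2 : Even N → Even z) :
    ∃ k l : ℤ, a * k + b * l = z ∧ IsCoprime k N ∧ IsCoprime l N := by
  obtain ⟨u, v, huv⟩ := hab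
  obtain ⟨k₀, l₀, hsol⟩ : ∃ k₀ l₀, a * k₀ + b * l₀ = z :=
    ⟨z * u, z * v, by linear_combination z * huv⟩
  have hlocal (p : ℕ) (hp : p ∈ N.primeFactors) :
      ∃ j : ZMod p, (k₀ : ZMod p) + b * j ≠ 0 ∧ (l₀ : ZMod p) - a * j ≠ 0 := by
    have hpp := Nat.prime_of_mem_primeFactors hp
    have := Fact.mk hpp
    have hzab : IsCoprime (z : ZMod p) (a * b) := by exact_mod_cast hz.intCast
    have hsol' : (a : ZMod p) * k₀ + b * l₀ = z := by exact_mod_cast congrArg _ hsol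
    apply exists_add_mul_ne_zero_and_sub_mul_ne_zero
    · by_contra! h
      rw [h.1, h.2, mul_zero, zero_mul, add_zero] at hsol'
      rw [← hsol', h.2, mul_zero, isCoprime_zero_left] at hzab
      exact not_isUnit_zero hzab
    · by_contra! h
      rw [h.1, h.2, mul_zero, zero_mul, zero_add] at hsol'
      rw [← hsol', h.2, zero_mul, isCoprime_zero_left] at hzab
      exact not_isUnit_zero hzab
    · intro hchar
      have hp2 : p = 2 := (Nat.prime_dvd_prime_iff_eq hpp Nat.prime_two).mp
        ((ZMod.natCast_eq_zero_iff 2 p).mp (by exact_mod_cast hchar))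
      subst hp2
      rw [hsol', ZMod.intCast_zmod_eq_zero_iff_dvd]
      exact (h2 (even_iff_two_dvd.mpr (Nat.dvd_of_mem_primeFactors hp))).two_dvd
  obtain ⟨j, hj⟩ := N.exists_forall_mem_primeFactors _ hlocal
  refine ⟨k₀ + b * j, l₀ - a * j, by linear_combination hsol, ?_, ?_⟩ <;>
    refine Int.isCoprime_of_forall_prime fun p hp hpN => ?_ <;>
    push_cast
  · exact (hj p (Nat.mem_primeFactors.mpr ⟨hp, hpN, hN⟩)).1
  · exact (hj p (Nat.mem_primeFactors.mpr ⟨hp, hpN, hN⟩)).2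

theorem IsCoprime.mul_add_mul {R : Type*} [CommRing R] {a b k l : R} (hab : IsCoprime a b)
    (hk : IsCoprime k b) (hl : IsCoprime l a) : IsCoprime (a * k + b * l) (a * b) := by
  refine IsCoprime.mul_right ?_ ((hab.mul_left hk).add_mul_left_left l)
  rw [add_comm]
  exact (hab.symm.mul_left hl).add_mul_left_left k

theorem Int.odd_of_isCoprime_of_even {k m : ℤ} (h : IsCoprime k m) (hm : Even m) : Odd k := by
  rw [← Int.not_even_iff_odd]
  intro hk
  have := h.isUnit_of_dvd' hk.two_dvd hm.two_dvd
  norm_num [Int.isUnit_iff] at this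

theorem Nat.even_div_of_odd {n a : ℕ} (hn : Even n) (ha : Odd a) (han : a ∣ n) : Even (n / a) :=
  (Nat.even_mul.mp ((Nat.mul_div_cancel' han).symm ▸ hn)).resolve_left (Nat.not_even_iff_odd.mpr ha)

theorem Nat.dvd_iff_of_isGreatest_coprime {N k m : ℕ} (hN : N ≠ 0)
    (hm : IsGreatest {d | d ∣ N ∧ d.Coprime k} m) (d : ℕ) : d ∣ m ↔ d ∣ N ∧ d.Coprime k := by
  refine ⟨fun hd => ⟨hd.trans hm.1.1, hm.1.2.coprime_dvd_left hd⟩, fun ⟨hdN, hdk⟩ => ?_⟩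
  have hm0 : m ≠ 0 := ne_zero_of_dvd_ne_zero hN hm.1.1
  have hd0 : d ≠ 0 := ne_zero_of_dvd_ne_zero hN hdN
  have hlcm : d.lcm m ∈ {d | d ∣ N ∧ d.Coprime k} :=
    ⟨Nat.lcm_dvd hdN hm.1.1, (hdk.mul_left hm.1.2).coprime_dvd_left (Nat.lcm_dvd_mul d m)⟩
  have : d.lcm m = m := le_antisymm (hm.2 hlcm)
    (Nat.le_of_dvd (Nat.pos_of_ne_zero (Nat.lcm_ne_zero hd0 hm0)) (Nat.dvd_lcm_right d m))
  exact this ▸ Nat.dvd_lcm_left d m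

namespace ZMod

def atom {n : ℕ} (x : ZMod n) : Set (ZMod n) := {u | zmultiples u = zmultiples x}

theorem zmultiples_intCast_eq_zmultiples_gcd (n : ℕ) (z : ℤ) :
    zmultiples (z : ZMod n) = zmultiples ((z.gcd n : ℕ) : ZMod n) := by
  refine le_antisymm (zmultiples_le_of_mem ?_) (zmultiples_le_of_mem ?_) <;>
    rw [mem_zmultiples_iff]
  · obtain ⟨q, hq⟩ := Int.gcd_dvd_left z n
    refine ⟨q, ?_⟩
    rw [zsmul_eq_mul, congrArg (Int.cast : ℤ → ZMod n) hq]
    push_cast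
    ring
  · refine ⟨z.gcdA n, ?_⟩
    have hbezout := congrArg (Int.cast : ℤ → ZMod n) (Int.gcd_eq_gcd_ab z n)
    push_cast [natCast_self] at hbezout
    rw [hbezout, zsmul_eq_mul]
    ring

theorem zmultiples_natCast_eq_zmultiples_natCast_iff {n e f : ℕ} (hn : n ≠ 0) (he : e ∣ n)
    (hf : f ∣ n) : zmultiples (e : ZMod n) = zmultiples (f : ZMod n) ↔ e = f := by
  refine ⟨fun h => ?_, fun h => h ▸ rfl⟩
  have hcard := congrArg (fun H : AddSubgroup (ZMod n) => Nat.card H) h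
  simp only [Nat.card_zmultiples, addOrderOf_coe _ hn, Nat.gcd_eq_right he,
    Nat.gcd_eq_right hf] at hcard
  rw [← Nat.div_div_self he hn, hcard, Nat.div_div_self hf hn]

theorem intCast_mem_atom_natCast_iff {n e : ℕ} (hn : n ≠ 0) (he : e ∣ n) (z : ℤ) :
    (z : ZMod n) ∈ atom (e : ZMod n) ↔ z.gcd n = e := by
  rw [atom, Set.mem_ofPred_eq, zmultiples_intCast_eq_zmultiples_gcd,
    zmultiples_natCast_eq_zmultiples_natCast_iff hn
      (Int.natCast_dvd_natCast.mp (Int.gcd_dvd_right z n)) he]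

theorem mem_atom_natCast_iff {n e : ℕ} (hn : n ≠ 0) (he : e ∣ n) (x : ZMod n) :
    x ∈ atom (e : ZMod n) ↔ ∃ k : ℤ, IsCoprime k (n / e : ℕ) ∧ x = ((e * k : ℤ) : ZMod n) := by
  have he0 : 0 < e := Nat.pos_of_dvd_of_pos he (Nat.pos_of_ne_zero hn)
  have hgcd (k : ℤ) : (e * k : ℤ).gcd n = e ↔ IsCoprime k (n / e : ℕ) := by
    rw [Int.isCoprime_iff_gcd_eq_one, ← Nat.mul_div_cancel' he, Nat.cast_mul, Int.gcd_mul_left,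
      Int.natAbs_natCast, Nat.mul_div_cancel_left _ he0, Nat.mul_eq_left he0.ne']
  constructor
  · intro hx
    obtain ⟨k, rfl⟩ := mem_zmultiples_iff.mp (hx ▸ mem_zmultiples x)
    have hcast : k • (e : ZMod n) = ((e * k : ℤ) : ZMod n) := by push_cast; rw [zsmul_eq_mul]; ring
    rw [hcast, intCast_mem_atom_natCast_iff hn he, hgcd] at hx
    exact ⟨k, hx, hcast⟩
  · rintro ⟨k, hk, rfl⟩
    rwa [intCast_mem_atom_natCast_iff hn he, hgcd]

theorem disjoint_atom_natCast {n e f : ℕ} (hn : n ≠ 0) (he : e ∣ n) (hf : f ∣ n) (hef : e ≠ f) :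
    Disjoint (atom (e : ZMod n)) (atom (f : ZMod n)) :=
  Set.disjoint_left.mpr fun _ hze hzf =>
    hef ((zmultiples_natCast_eq_zmultiples_natCast_iff hn he hf).mp (hze.symm.trans hzf))

section

variable {g n a b : ℕ}

theorem mem_atom_natCast_mul_iff (hg : g ≠ 0) (hn : n ≠ 0) {e : ℕ} (he : e ∣ n)
    (x : ZMod (g * n)) : x ∈ atom ((g * e : ℕ) : ZMod (g * n)) ↔
      ∃ k : ℤ, IsCoprime k (n / e : ℕ) ∧ x = (((g * e : ℕ) * k : ℤ) : ZMod (g * n)) := by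
  rw [mem_atom_natCast_iff (mul_ne_zero hg hn) (mul_dvd_mul_left g he),
    Nat.mul_div_mul_left _ _ (Nat.pos_of_ne_zero hg)]

theorem exists_mem_atom_of_mem_atom_add_atom (hg : g ≠ 0) (hn : n ≠ 0) (hab : a.Coprime b)
    (habn : a * b ∣ n) (hn2 : Even n) (hodd : Odd (a * b)) {c : ZMod (g * n)}
    (hc : c ∈ atom ((g * a : ℕ) : ZMod (g * n)) + atom ((g * b : ℕ) : ZMod (g * n))) :
    ∃ d, (d ∣ n ∧ d.Coprime (a * b) ∧ Even d) ∧ c ∈ atom ((g * d : ℕ) : ZMod (g * n)) := by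
  have hgn : g * n ≠ 0 := mul_ne_zero hg hn
  have ha : a ∣ n := (dvd_mul_right a b).trans habn
  have hb : b ∣ n := (dvd_mul_left b a).trans habn
  obtain ⟨u, hu, v, hv, rfl⟩ := Set.mem_add.mp hc
  obtain ⟨k, hk, rfl⟩ := (mem_atom_natCast_mul_iff hg hn ha u).mp hu
  obtain ⟨l, hl, rfl⟩ := (mem_atom_natCast_mul_iff hg hn hb v).mp hv
  have hcop : IsCoprime ((a : ℤ) * k + b * l) (a * b) :=
    (Nat.isCoprime_iff_coprime.mpr hab).mul_add_mul
      (hk.of_isCoprime_of_dvd_right (Int.natCast_dvd_natCast.mpr (Nat.dvd_div_of_mul_dvd habn)))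
      (hl.of_isCoprime_of_dvd_right (Int.natCast_dvd_natCast.mpr
        (Nat.dvd_div_of_mul_dvd ((mul_comm b a).symm ▸ habn))))
  have heven : Even ((a : ℤ) * k + b * l) := by
    have hk' := Int.odd_of_isCoprime_of_even hk
      (by exact_mod_cast Nat.even_div_of_odd hn2 (Nat.odd_mul.mp hodd).1 ha)
    have hl' := Int.odd_of_isCoprime_of_even hl
      (by exact_mod_cast Nat.even_div_of_odd hn2 (Nat.odd_mul.mp hodd).2 hb)
    have hab' : Odd (a : ℤ) ∧ Odd (b : ℤ) := by exact_mod_cast Nat.odd_mul.mp hodd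
    exact (hab'.1.mul hk').add_odd (hab'.2.mul hl')
  refine ⟨((a : ℤ) * k + b * l).gcd n,
    ⟨Int.natCast_dvd_natCast.mp (Int.gcd_dvd_right _ _), ?_, ?_⟩, ?_⟩
  · exact (Int.isCoprime_iff_nat_coprime.mp hcop).coprime_dvd_left (Nat.gcd_dvd_left _ _)
  · exact even_iff_two_dvd.mpr (Nat.dvd_gcd (Int.natCast_dvd.mp heven.two_dvd) hn2.two_dvd)
  · have hsum : (((g * a : ℕ) * k : ℤ) : ZMod (g * n)) + (((g * b : ℕ) * l : ℤ) : ZMod (g * n)) =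
        ((g * (a * k + b * l) : ℤ) : ZMod (g * n)) := by push_cast; ring
    rw [hsum, intCast_mem_atom_natCast_iff hgn
      (mul_dvd_mul_left g (Int.natCast_dvd_natCast.mp (Int.gcd_dvd_right _ _))), Nat.cast_mul,
      Int.gcd_mul_left, Int.natAbs_natCast]

theorem mem_atom_add_atom_of_mem_atom (hg : g ≠ 0) (hn : n ≠ 0) (hab : a.Coprime b)
    (habn : a * b ∣ n) {d : ℕ} (hd : d ∣ n ∧ d.Coprime (a * b)) (hd2 : Even d) {c : ZMod (g * n)}
    (hc : c ∈ atom ((g * d : ℕ) : ZMod (g * n))) :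
    c ∈ atom ((g * a : ℕ) : ZMod (g * n)) + atom ((g * b : ℕ) : ZMod (g * n)) := by
  have ha : a ∣ n := (dvd_mul_right a b).trans habn
  have hb : b ∣ n := (dvd_mul_left b a).trans habn
  obtain ⟨w, hw, rfl⟩ := (mem_atom_natCast_mul_iff hg hn hd.1 c).mp hc
  have hdab : IsCoprime (d : ℤ) (a * b) := by exact_mod_cast Nat.isCoprime_iff_coprime.mpr hd.2
  have hwab : IsCoprime w (a * b) := by
    refine hw.of_isCoprime_of_dvd_right ?_
    exact_mod_cast Nat.dvd_div_of_mul_dvd (hd.2.mul_dvd_of_dvd_of_dvd hd.1 habn)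
  obtain ⟨k, l, hkl, hk, hl⟩ := Int.exists_mul_add_mul_eq_isCoprime hn
    (Nat.isCoprime_iff_coprime.mpr hab) (hdab.mul_left hwab)
    fun _ => (by exact_mod_cast hd2 : Even (d : ℤ)).mul_right w
  refine Set.mem_add.mpr ⟨(((g * a : ℕ) * k : ℤ) : ZMod (g * n)), ?_,
    (((g * b : ℕ) * l : ℤ) : ZMod (g * n)), ?_, ?_⟩
  · exact (mem_atom_natCast_mul_iff hg hn ha _).mpr
      ⟨k, hk.of_isCoprime_of_dvd_right (Int.natCast_dvd_natCast.mpr (Nat.div_dvd_of_dvd ha)), rfl⟩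
  · exact (mem_atom_natCast_mul_iff hg hn hb _).mpr
      ⟨l, hl.of_isCoprime_of_dvd_right (Int.natCast_dvd_natCast.mpr (Nat.div_dvd_of_dvd hb)), rfl⟩
  · have := congrArg (fun x : ℤ => ((g * x : ℤ) : ZMod (g * n))) hkl
    push_cast at this ⊢
    linear_combination this

theorem atom_add_atom_eq_biUnion (hg : g ≠ 0) (hn : n ≠ 0) (hab : a.Coprime b)
    (habn : a * b ∣ n) (hn2 : Even n) (hodd : Odd (a * b)) :
    atom ((g * a : ℕ) : ZMod (g * n)) + atom ((g * b : ℕ) : ZMod (g * n)) =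
      ⋃ d ∈ {d | d ∣ n ∧ d.Coprime (a * b) ∧ Even d}, atom ((g * d : ℕ) : ZMod (g * n)) := by
  ext c
  simp only [Set.mem_iUnion, Set.mem_ofPred_eq, exists_prop]
  exact ⟨exists_mem_atom_of_mem_atom_add_atom hg hn hab habn hn2 hodd,
    fun ⟨_, ⟨hdn, hdab, hd2⟩, hc⟩ =>
      mem_atom_add_atom_of_mem_atom hg hn hab habn ⟨hdn, hdab⟩ hd2 hc⟩

end

end ZMod

theorem stmt_19 (n a b : ℕ) (hn : 0 < n) (ha : a ∣ n) (hb : b ∣ n)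
    (g : ℕ) (hg : g = Nat.gcd a b)
    (hcase : Even (n / g) ∧ Odd ((a / g) * (b / g)))
    (m₃ : ℕ)
    (hm₃ : m₃ ∣ (n / g) / ((a / g) * (b / g)) ∧ Nat.Coprime m₃ ((a / g) * (b / g)) ∧
      ∀ d : ℕ, d ∣ (n / g) / ((a / g) * (b / g)) → Nat.Coprime d ((a / g) * (b / g)) →
        d ≤ m₃) :
    {c : ZMod n | ∃ u v : ZMod n,
        AddSubgroup.zmultiples u = AddSubgroup.zmultiples (a : ZMod n) ∧
        AddSubgroup.zmultiples v = AddSubgroup.zmultiples (b : ZMod n) ∧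
        u + v = c} =
      ⋃ d ∈ {d : ℕ | d ∣ m₃ ∧ Even d},
        {z : ZMod n | AddSubgroup.zmultiples z =
          AddSubgroup.zmultiples ((g * d : ℕ) : ZMod n)} ∧
    ∀ d₁ d₂ : ℕ, d₁ ∣ m₃ → Even d₁ → d₂ ∣ m₃ → Even d₂ → d₁ ≠ d₂ →
      Disjoint
        {z : ZMod n | AddSubgroup.zmultiples z =
          AddSubgroup.zmultiples ((g * d₁ : ℕ) : ZMod n)}
        {z : ZMod n | AddSubgroup.zmultiples z =
          AddSubgroup.zmultiples ((g * d₂ : ℕ) : ZMod n)} := by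
  have hg0 : 0 < g := hg ▸ Nat.gcd_pos_of_pos_left b (Nat.pos_of_dvd_of_pos ha hn)
  obtain ⟨a, rfl⟩ : g ∣ a := hg ▸ Nat.gcd_dvd_left a b
  obtain ⟨b, rfl⟩ : g ∣ b := hg ▸ Nat.gcd_dvd_right _ b
  obtain ⟨n, rfl⟩ : g ∣ n := (dvd_mul_right g a).trans ha
  simp only [Nat.mul_div_cancel_left _ hg0] at hcase hm₃
  have hn0 : n ≠ 0 := right_ne_zero_of_mul hn.ne'
  have hab : a.Coprime b := (Nat.mul_eq_left hg0.ne').mp (Nat.gcd_mul_left g a b ▸ hg).symm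
  have habn : a * b ∣ n := hab.mul_dvd_of_dvd_of_dvd (Nat.dvd_of_mul_dvd_mul_left hg0 ha)
    (Nat.dvd_of_mul_dvd_mul_left hg0 hb)
  have hm (d : ℕ) : d ∣ m₃ ↔ d ∣ n ∧ d.Coprime (a * b) := by
    have hquot : n / (a * b) ≠ 0 :=
      (Nat.div_ne_zero_iff_of_dvd habn).mpr ⟨hn0, ne_zero_of_dvd_ne_zero hn0 habn⟩
    rw [Nat.dvd_iff_of_isGreatest_coprime hquot
      ⟨⟨hm₃.1, hm₃.2.1⟩, fun d hd => hm₃.2.2 d hd.1 hd.2⟩ d]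
    exact ⟨fun h => ⟨h.1.trans (Nat.div_dvd_of_dvd habn), h.2⟩, fun h =>
      ⟨Nat.dvd_div_of_mul_dvd (mul_comm d _ ▸ h.2.mul_dvd_of_dvd_of_dvd h.1 habn), h.2⟩⟩
  refine ⟨?_, fun d₁ d₂ h₁ _ h₂ _ hne => ?_⟩
  · convert ZMod.atom_add_atom_eq_biUnion hg0.ne' hn0 hab habn hcase.1 hcase.2 using 1
    · ext c
      exact ⟨fun ⟨u, v, hu, hv, h⟩ => ⟨u, hu, v, hv, h⟩, fun ⟨u, hu, v, hv, h⟩ => ⟨u, v, hu, hv, h⟩⟩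
    · simp only [hm, and_assoc]
      rfl
  · exact ZMod.disjoint_atom_natCast hn.ne' (mul_dvd_mul_left g ((hm d₁).mp h₁).1)
      (mul_dvd_mul_left g ((hm d₂).mp h₂).1) fun h => hne (Nat.eq_of_mul_eq_mul_left hg0 h)
end
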